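/- Let X be a finite-dimensional Banach space and T = {T(t,s) : t, s > a₀} an invertible evolution family on X. Let a₀* > a₀ and assume T exhibits bounded growth and bounded decay on [a₀*,∞). Then the following are equivalent: (a) T admits an exponential dichotomy on [a₀*,∞); (b) T is exponentially expansive on [a₀*,∞); (c) T is uniformly noncritical on [a₀*,∞). -/

import Mathlib

open Set Real

noncomputable section

variable {X : Type*} [NormedAddCommGroup X] [NormedSpace ℝ X] [CompleteSpace X]

/-- An invertible evolution family on `X` with parameter `a₀ ∈ ℝ ∪ {-∞}` (modelled as
`EReal`), viewed as a two-parameter family `T t s` for all `t, s > a₀` (for `t < s`,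
`T t s` is the inverse of `T s t`): `T t t = Id` for `t > a₀`; the two-sided cocycle
identity `T t s ∘ T s r = T t r` holds for all `t, s, r > a₀`; and for every `s > a₀`
and `v ∈ X`, the map `t ↦ T t s v` is continuous on `[s, ∞)`. -/
def IsInvertibleEvolutionFamily (a₀ : EReal) (T : ℝ → ℝ → X →L[ℝ] X) : Prop :=
  (∀ t : ℝ, a₀ < (t : EReal) → T t t = ContinuousLinearMap.id ℝ X) ∧
  (∀ t s r : ℝ, a₀ < (t : EReal) → a₀ < (s : EReal) → a₀ < (r : EReal) →
    (T t s).comp (T s r) = T t r) ∧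
  (∀ s : ℝ, a₀ < (s : EReal) → ∀ v : X, ContinuousOn (fun t => T t s v) (Set.Ici s))

/-- `T` exhibits bounded growth on `J`: there are `K, μ > 0` with
`‖T t s‖ ≤ K e^{μ (t-s)}` for all `t, s ∈ J` with `t ≥ s`. -/
def BoundedGrowthOn (T : ℝ → ℝ → X →L[ℝ] X) (J : Set ℝ) : Prop :=
  ∃ K : ℝ, 0 < K ∧ ∃ μ : ℝ, 0 < μ ∧
    ∀ t ∈ J, ∀ s ∈ J, s ≤ t → ‖T t s‖ ≤ K * Real.exp (μ * (t - s))

/-- `T` exhibits bounded decay on `J`: there are `K, μ > 0` with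
`‖T t s‖ ≤ K e^{μ (s-t)}` for all `t, s ∈ J` with `t ≤ s`. -/
def BoundedDecayOn (T : ℝ → ℝ → X →L[ℝ] X) (J : Set ℝ) : Prop :=
  ∃ K : ℝ, 0 < K ∧ ∃ μ : ℝ, 0 < μ ∧
    ∀ t ∈ J, ∀ s ∈ J, t ≤ s → ‖T t s‖ ≤ K * Real.exp (μ * (s - t))

/-- The family of projections `P` with constants `D, lam` witnesses an exponential
dichotomy of the invertible evolution family `T` on `J`: the `P t` are projections
commuting with the evolution family, `T t s` restricted to `Ker P s` is a bijection onto
`Ker P t` for `t ≥ s` in `J`, `‖T t s ∘ P s‖ ≤ D e^{-lam (t-s)}` for `t ≥ s` in `J`, and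
`‖T t s ∘ (Id - P s)‖ ≤ D e^{-lam (s-t)}` for `t ≤ s` in `J`. -/
def ExpDichotomyProjWith (T : ℝ → ℝ → X →L[ℝ] X) (J : Set ℝ)
    (P : ℝ → X →L[ℝ] X) (D lam : ℝ) : Prop :=
  (∀ t ∈ J, (P t).comp (P t) = P t) ∧
  (∀ t ∈ J, ∀ s ∈ J, s ≤ t → (P t).comp (T t s) = (T t s).comp (P s)) ∧
  (∀ t ∈ J, ∀ s ∈ J, s ≤ t →
    Set.BijOn (T t s) (LinearMap.ker (P s : X →ₗ[ℝ] X) : Set X) (LinearMap.ker (P t : X →ₗ[ℝ] X) : Set X)) ∧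
  (∀ t ∈ J, ∀ s ∈ J, s ≤ t →
    ‖(T t s).comp (P s)‖ ≤ D * Real.exp (-lam * (t - s))) ∧
  (∀ t ∈ J, ∀ s ∈ J, t ≤ s →
    ‖(T t s).comp (ContinuousLinearMap.id ℝ X - P s)‖ ≤ D * Real.exp (-lam * (s - t)))

/-- `T` admits an exponential dichotomy on `J`. -/
def ExpDichotomyOn (T : ℝ → ℝ → X →L[ℝ] X) (J : Set ℝ) : Prop :=
  ∃ (P : ℝ → X →L[ℝ] X) (D lam : ℝ), 0 < D ∧ 0 < lam ∧ ExpDichotomyProjWith T J P D lam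

/-- `T` is exponentially expansive on `J`: there are `L, β > 0` with
`‖v‖ ≤ L (e^{-β (t-a)} ‖T a t v‖ + e^{-β (b-t)} ‖T b t v‖)` for every `v ∈ X` and all
`a ≤ t ≤ b` with `[a, b] ⊆ J`. -/
def ExpExpansiveOn (T : ℝ → ℝ → X →L[ℝ] X) (J : Set ℝ) : Prop :=
  ∃ L : ℝ, 0 < L ∧ ∃ β : ℝ, 0 < β ∧
    ∀ (v : X) (a t b : ℝ), a ≤ t → t ≤ b → Set.Icc a b ⊆ J →
      ‖v‖ ≤ L * (Real.exp (-β * (t - a)) * ‖T a t v‖ +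
        Real.exp (-β * (b - t)) * ‖T b t v‖)

/-- `T` (with parameter `a₀`) is uniformly noncritical on `[a₀*, ∞)`: there are
`θ ∈ (0, 1)` and `C > 0` such that `‖v‖ ≤ θ sup {‖T u t v‖ : |u - t| ≤ C}` for every
`v ∈ X` and every `t ≥ a₀* + C`; the inequality against the supremum is expressed
equivalently via arbitrary upper bounds `M` of `{‖T u t v‖ : |u - t| ≤ C}`. -/
def UnifNoncriticalOn (a₀ : EReal) (T : ℝ → ℝ → X →L[ℝ] X) (astar : ℝ) : Prop :=
  ∃ θ : ℝ, 0 < θ ∧ θ < 1 ∧ ∃ C : ℝ, 0 < C ∧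
    ∀ (v : X) (t : ℝ), a₀ < (t : EReal) → astar + C ≤ t →
      ∀ M : ℝ, (∀ u : ℝ, a₀ < (u : EReal) → |u - t| ≤ C → ‖T u t v‖ ≤ M) → ‖v‖ ≤ θ * M

open Filter Topology

/-!
(a) ⇒ (b): split `v` along the dichotomy projection at time `t`. (b) ⇒ (c): apply (b) on the
window `[t - C, t + C]` with `2 L e^{-βC} < 1`.

(c) ⇒ (b): with `λ = (1 - θ) / C`, compare `‖T(τ,t) v‖` on `[a, b]` with the weight
`φ(τ) = e^{-λ(τ-a)} ‖T(a,t) v‖ + e^{-λ(b-τ)} ‖T(b,t) v‖`, which varies by at most `e^{λC}` over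
distance `C`. At a maximum of the ratio in the interior, noncriticality contradicts
`θ e^{λC} < 1`; within `C` of an end, bounded growth and decay bound the ratio.

(b) ⇒ (a): letting `b → ∞` in (b) shows that the bounded solutions (the stable subspace `S` at
time `a`) decay uniformly. A solution through a complement `U` of `S` is unbounded, so it starts
to grow at some time, and once it grows, (b) makes it grow exponentially forever; compactness of
the unit sphere of `U` bounds the onset time uniformly, which gives uniform backward decay on `U`.
The projections onto `T(t,a) S` along `T(t,a) U` are uniformly bounded since over a fixed time
the unstable part outgrows the stable part.
-/

theorem le_mul_of_noncritical {g φ : ℝ → ℝ} {a b C θ ρ L : ℝ}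
    (hg : ContinuousOn g (Icc a b)) (hφ : ContinuousOn φ (Icc a b))
    (hg0 : ∀ τ ∈ Icc a b, 0 ≤ g τ) (hφ0 : ∀ τ ∈ Icc a b, 0 < φ τ)
    (hφC : ∀ τ u, |u - τ| ≤ C → φ u ≤ ρ * φ τ) (hθρ : θ * ρ < 1)
    (hnc : ∀ τ ∈ Icc (a + C) (b - C), ∀ M, (∀ u ∈ Icc (τ - C) (τ + C), g u ≤ M) → g τ ≤ θ * M)
    (hends : ∀ τ ∈ Icc a b, τ < a + C ∨ b - C < τ → g τ ≤ L * φ τ) (hL : 0 ≤ L) :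
    ∀ τ ∈ Icc a b, g τ ≤ L * φ τ := by
  intro τ hτ
  obtain ⟨σ, hσ, hmax⟩ := isCompact_Icc.exists_isMaxOn ⟨τ, hτ⟩
    (hg.div hφ fun x hx => (hφ0 x hx).ne')
  set m := g σ / φ σ
  have hle : ∀ u ∈ Icc a b, g u ≤ m * φ u := fun u hu =>
    (div_le_iff₀ (hφ0 u hu)).1 (hmax hu)
  suffices m ≤ L from (hle τ hτ).trans (mul_le_mul_of_nonneg_right this (hφ0 τ hτ).le)
  by_cases hσends : σ < a + C ∨ b - C < σ
  · exact (div_le_iff₀ (hφ0 σ hσ)).2 (hends σ hσ hσends)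
  push Not at hσends
  have hm0 : 0 ≤ m := div_nonneg (hg0 σ hσ) (hφ0 σ hσ).le
  have hσm : g σ = m * φ σ := (div_mul_cancel₀ _ (hφ0 σ hσ).ne').symm
  -- at an interior maximum of `g / φ`, noncriticality beats the variation of the weight
  have hσθρ : g σ ≤ θ * ρ * g σ := by
    calc g σ ≤ θ * (m * (ρ * φ σ)) := hnc σ hσends _ fun u hu =>
          (hle u ⟨by linarith [hu.1], by linarith [hu.2]⟩).trans
            (mul_le_mul_of_nonneg_left (hφC σ u (abs_le.2 ⟨by linarith [hu.1], by linarith [hu.2]⟩))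
              hm0)
      _ = θ * ρ * g σ := by rw [hσm]; ring
  have : g σ ≤ 0 := by nlinarith [hg0 σ hσ]
  have : m ≤ 0 := div_nonpos_of_nonpos_of_nonneg this (hφ0 σ hσ).le
  linarith

theorem exp_mul_add_exp_mul_le {lam A B a b τ u C : ℝ} (hlam : 0 ≤ lam) (hA : 0 ≤ A) (hB : 0 ≤ B)
    (h : |u - τ| ≤ C) :
    exp (-lam * (u - a)) * A + exp (-lam * (b - u)) * B ≤
      exp (lam * C) * (exp (-lam * (τ - a)) * A + exp (-lam * (b - τ)) * B) := by
  obtain ⟨h₁, h₂⟩ := abs_le.1 h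
  rw [mul_add, ← mul_assoc, ← mul_assoc, ← exp_add, ← exp_add]
  gcongr <;> nlinarith

theorem le_exp_mul_exp_mul {lam C d A : ℝ} (hlam : 0 ≤ lam) (hd : d ≤ C) (hA : 0 ≤ A) :
    A ≤ exp (lam * C) * (exp (-lam * d) * A) := by
  rw [← mul_assoc, ← exp_add]
  exact le_mul_of_one_le_left hA (one_le_exp (by nlinarith))

theorem norm_le_of_contracting_of_expanding {E F 𝓕 : Type*} [SeminormedAddCommGroup E]
    [SeminormedAddCommGroup F] [FunLike 𝓕 E F] [AddHomClass 𝓕 E F] (A : 𝓕) {x y : E}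
    {ε κ M : ℝ} (hε : 0 ≤ ε) (hκ : 0 ≤ κ) (hεκ : 2 * ε * κ ≤ 1) (hx : ‖A x‖ ≤ ε * ‖x‖)
    (hy : ‖y‖ ≤ κ * ‖A y‖) (hxy : ‖A (x + y)‖ ≤ M * ‖x + y‖) :
    ‖y‖ ≤ 2 * κ * (M + ε) * ‖x + y‖ := by
  have hAy : ‖A y‖ ≤ M * ‖x + y‖ + ε * (‖x + y‖ + ‖y‖) := by
    have hx' : ‖x‖ ≤ ‖x + y‖ + ‖y‖ := by simpa using norm_sub_le (x + y) y
    calc ‖A y‖ = ‖A (x + y) - A x‖ := by rw [map_add, add_sub_cancel_left]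
      _ ≤ ‖A (x + y)‖ + ‖A x‖ := norm_sub_le _ _
      _ ≤ _ := add_le_add hxy (hx.trans (mul_le_mul_of_nonneg_left hx' hε))
  have := hy.trans (mul_le_mul_of_nonneg_left hAy hκ)
  nlinarith [norm_nonneg y, norm_nonneg (x + y)]

section

omit [CompleteSpace X]

variable {T : ℝ → ℝ → X →L[ℝ] X} {J : Set ℝ} {a L β c C : ℝ} {P₀ : X →L[ℝ] X}

structure IsCocycleOn (T : ℝ → ℝ → X →L[ℝ] X) (J : Set ℝ) : Prop where
  apply_self {t : ℝ} : t ∈ J → ∀ v, T t t v = v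
  apply_apply {t s r : ℝ} : t ∈ J → s ∈ J → r ∈ J → ∀ v, T t s (T s r v) = T t r v

theorem IsCocycleOn.apply_apply_self (hT : IsCocycleOn T J) {t s : ℝ} (ht : t ∈ J) (hs : s ∈ J)
    (v : X) : T t s (T s t v) = v := by
  rw [hT.apply_apply ht hs ht, hT.apply_self ht]

theorem IsInvertibleEvolutionFamily.isCocycleOn {a₀ : EReal} {a : ℝ}
    (hT : IsInvertibleEvolutionFamily a₀ T) (ha : a₀ < a) : IsCocycleOn T (Ici a) := by
  have hJ : ∀ t ∈ Ici a, a₀ < (t : EReal) := fun t ht => ha.trans_le (EReal.coe_le_coe_iff.2 ht)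
  refine ⟨fun ht v => by rw [hT.1 _ (hJ _ ht)]; rfl, fun ht hs hr v => ?_⟩
  rw [← ContinuousLinearMap.comp_apply, hT.2.1 _ _ _ (hJ _ ht) (hJ _ hs) (hJ _ hr)]

theorem IsInvertibleEvolutionFamily.continuousOn_apply {a₀ : EReal} {a s : ℝ}
    (hT : IsInvertibleEvolutionFamily a₀ T) (ha : a₀ < a) (hs : a ≤ s) (v : X) :
    ContinuousOn (fun t => T t s v) (Ici a) :=
  (hT.2.2 a ha (T a s v)).congr fun _ ht =>
    ((hT.isCocycleOn ha).apply_apply ht self_mem_Ici hs v).symm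

theorem BoundedGrowthOn.exists_norm_le_of_abs_sub_le (hg : BoundedGrowthOn T J)
    (hd : BoundedDecayOn T J) (R : ℝ) :
    ∃ K, 0 < K ∧ ∀ t ∈ J, ∀ s ∈ J, |t - s| ≤ R → ‖T t s‖ ≤ K := by
  obtain ⟨K₁, hK₁, μ₁, hμ₁, hg⟩ := hg
  obtain ⟨K₂, hK₂, μ₂, hμ₂, hd⟩ := hd
  refine ⟨max (K₁ * exp (μ₁ * R)) (K₂ * exp (μ₂ * R)), by positivity, fun t ht s hs hts => ?_⟩
  rcases le_total s t with hst | hts'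
  · refine (hg t ht s hs hst).trans (le_max_of_le_left ?_)
    gcongr
    linarith [abs_le.1 hts]
  · refine (hd t ht s hs hts').trans (le_max_of_le_right ?_)
    gcongr
    linarith [abs_le.1 hts]

theorem ExpDichotomyOn.expExpansiveOn (h : ExpDichotomyOn T J) (hT : IsCocycleOn T J) :
    ExpExpansiveOn T J := by
  obtain ⟨P, D, lam, hD, hlam, -, hcomm, -, hstable, hunstable⟩ := h
  refine ⟨D, hD, lam, hlam, fun v a t b hat htb hJ => ?_⟩
  have ha : a ∈ J := hJ ⟨le_rfl, hat.trans htb⟩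
  have ht : t ∈ J := hJ ⟨hat, htb⟩
  have hb : b ∈ J := hJ ⟨hat.trans htb, le_rfl⟩
  have hPv : P t v = (T t a).comp (P a) (T a t v) := by
    rw [← hcomm t ht a ha hat, ContinuousLinearMap.comp_apply, hT.apply_apply_self ht ha]
  have hQv : v - P t v = (T t b).comp (ContinuousLinearMap.id ℝ X - P b) (T b t v) := by
    have := congr($(hcomm b hb t ht htb) v)
    simp only [ContinuousLinearMap.comp_apply] at this
    simp only [ContinuousLinearMap.comp_apply, sub_apply,
      ContinuousLinearMap.id_apply, this, ← map_sub, hT.apply_apply_self ht hb]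
  calc ‖v‖ = ‖P t v + (v - P t v)‖ := by rw [add_sub_cancel]
    _ ≤ ‖P t v‖ + ‖v - P t v‖ := norm_add_le _ _
    _ ≤ D * exp (-lam * (t - a)) * ‖T a t v‖ + D * exp (-lam * (b - t)) * ‖T b t v‖ := by
      rw [hQv, hPv]
      gcongr
      · exact ((T t a).comp (P a)).le_of_opNorm_le (hstable t ht a ha hat) _
      · exact (_ : X →L[ℝ] X).le_of_opNorm_le (hunstable t ht b hb htb) _
    _ = _ := by ring

theorem ExpExpansiveOn.unifNoncriticalOn {a₀ : EReal} {a : ℝ} (h : ExpExpansiveOn T (Ici a))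
    (ha : a₀ < a) : UnifNoncriticalOn a₀ T a := by
  obtain ⟨L, hL, β, hβ, hexp⟩ := h
  have hθ : 2 * L * exp (-β * (2 * L / β)) < 1 := by
    have := add_one_le_exp (2 * L)
    rw [neg_mul, mul_div_cancel₀ _ hβ.ne', exp_neg, ← div_eq_mul_inv, div_lt_one (exp_pos _)]
    linarith
  set C := 2 * L / β
  have hC : 0 < C := by positivity
  refine ⟨_, by positivity, hθ, C, hC, fun v t _ ht M hM => ?_⟩
  have hM' : ∀ u, |u - t| ≤ C → ‖T u t v‖ ≤ M := fun u hu =>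
    hM u (ha.trans_le (EReal.coe_le_coe_iff.2 (by linarith [abs_le.1 hu]))) hu
  calc ‖v‖ ≤ L * (exp (-β * C) * ‖T (t - C) t v‖ + exp (-β * C) * ‖T (t + C) t v‖) := by
        have := hexp v (t - C) t (t + C) (by linarith) (by linarith)
          (fun x hx => by simp only [mem_Ici]; linarith [hx.1])
        rwa [sub_sub_cancel, add_sub_cancel_left] at this
    _ ≤ L * (exp (-β * C) * M + exp (-β * C) * M) := by
        gcongr <;> exact hM' _ (by rw [abs_le]; constructor <;> linarith)
    _ = 2 * L * exp (-β * C) * M := by ring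

def ExpExpansiveWith (T : ℝ → ℝ → X →L[ℝ] X) (J : Set ℝ) (L β : ℝ) : Prop :=
  ∀ (v : X) (a t b : ℝ), a ≤ t → t ≤ b → Set.Icc a b ⊆ J →
    ‖v‖ ≤ L * (Real.exp (-β * (t - a)) * ‖T a t v‖ + Real.exp (-β * (b - t)) * ‖T b t v‖)

theorem UnifNoncriticalOn.norm_le_mul {a₀ : EReal} {a : ℝ} (h : UnifNoncriticalOn a₀ T a)
    (ha : a₀ < a) :
    ∃ θ C, θ < 1 ∧ 0 < C ∧ ∀ (w : X) (τ M : ℝ), a + C ≤ τ →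
      (∀ u ∈ Icc (τ - C) (τ + C), ‖T u τ w‖ ≤ M) → ‖w‖ ≤ θ * M := by
  obtain ⟨θ, -, hθ1, C, hC, hnc⟩ := h
  refine ⟨θ, C, hθ1, hC, fun w τ M hτ hM => ?_⟩
  refine hnc w τ (ha.trans_le (EReal.coe_le_coe_iff.2 (by linarith))) hτ M fun u _ hu => ?_
  obtain ⟨h₁, h₂⟩ := abs_le.1 hu
  exact hM u ⟨by linarith, by linarith⟩

theorem IsCocycleOn.expExpansiveWith_of_noncritical (hT : IsCocycleOn T (Ici a))
    (hcont : ∀ s, a ≤ s → ∀ v, ContinuousOn (fun t => T t s v) (Ici a)) {θ C K lam : ℝ}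
    (hnc : ∀ (w : X) (τ M : ℝ), a + C ≤ τ →
      (∀ u ∈ Icc (τ - C) (τ + C), ‖T u τ w‖ ≤ M) → ‖w‖ ≤ θ * M)
    (hC : 0 ≤ C) (hK : ∀ t ∈ Ici a, ∀ s ∈ Ici a, |t - s| ≤ C → ‖T t s‖ ≤ K) (hK0 : 0 ≤ K)
    (hlam : 0 ≤ lam) (hθ : θ * exp (lam * C) < 1) :
    ExpExpansiveWith T (Ici a) (K * exp (lam * C)) lam := by
  intro v a' t b hat htb hJ
  have ha' : a' ∈ Icc a' b := ⟨le_rfl, hat.trans htb⟩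
  have hb : b ∈ Icc a' b := ⟨hat.trans htb, le_rfl⟩
  have ht : t ∈ Icc a' b := ⟨hat, htb⟩
  have haa' : a ≤ a' := hJ ha'
  rcases eq_or_ne v 0 with rfl | hv
  · simp only [norm_zero, map_zero]; positivity
  have hva : 0 < ‖T a' t v‖ := norm_pos_iff.2 fun h0 => hv <| by
    rw [← hT.apply_apply_self (hJ ht) (hJ ha') v, h0, map_zero]
  have hnear : ∀ e ∈ Icc a' b, ∀ τ ∈ Icc a' b, |τ - e| ≤ C → ‖T τ t v‖ ≤ K * ‖T e t v‖ :=
    fun e he τ hτ hτe => by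
      rw [← hT.apply_apply (hJ hτ) (hJ he) (hJ ht)]
      exact (T τ e).le_of_opNorm_le (hK τ (hJ hτ) e (hJ he) hτe) _
  have key := le_mul_of_noncritical (a := a') (b := b) (C := C) (L := K * exp (lam * C))
    (g := fun τ => ‖T τ t v‖)
    (φ := fun τ => exp (-lam * (τ - a')) * ‖T a' t v‖ + exp (-lam * (b - τ)) * ‖T b t v‖)
    ((hcont t (hJ ht) v).norm.mono hJ) (by fun_prop) (fun _ _ => norm_nonneg _)
    (fun _ _ => by positivity)
    (fun τ u h => exp_mul_add_exp_mul_le hlam (norm_nonneg _) (norm_nonneg _) h) hθ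
    (fun τ hτ M hM => ?_) (fun τ hτ hτends => ?_) (by positivity) t ht
  · simpa only [hT.apply_self (hJ ht)] using key
  · have hτ' : τ ∈ Icc a' b := ⟨by linarith [hτ.1], by linarith [hτ.2]⟩
    refine hnc _ τ M (by linarith [hτ.1]) fun u hu => ?_
    rw [hT.apply_apply (hJ ⟨by linarith [hu.1, hτ.1], by linarith [hu.2, hτ.2]⟩) (hJ hτ') (hJ ht)]
    exact hM u hu
  · rcases hτends with hτa | hτb
    · calc ‖T τ t v‖ ≤ K * (exp (lam * C) * (exp (-lam * (τ - a')) * ‖T a' t v‖)) :=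
          (hnear a' ha' τ hτ (abs_le.2 ⟨by linarith [hτ.1], by linarith⟩)).trans <| by
            gcongr; exact le_exp_mul_exp_mul hlam (by linarith) (norm_nonneg _)
        _ ≤ _ := by rw [← mul_assoc]; gcongr; exact le_add_of_nonneg_right (by positivity)
    · calc ‖T τ t v‖ ≤ K * (exp (lam * C) * (exp (-lam * (b - τ)) * ‖T b t v‖)) :=
          (hnear b hb τ hτ (abs_le.2 ⟨by linarith, by linarith [hτ.2]⟩)).trans <| by
            gcongr; exact le_exp_mul_exp_mul hlam (by linarith) (norm_nonneg _)
        _ ≤ _ := by rw [← mul_assoc]; gcongr; exact le_add_of_nonneg_left (by positivity)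

theorem UnifNoncriticalOn.expExpansiveOn {a₀ : EReal} {a : ℝ} (h : UnifNoncriticalOn a₀ T a)
    (hT : IsInvertibleEvolutionFamily a₀ T) (ha : a₀ < a) (hgrowth : BoundedGrowthOn T (Ici a))
    (hdecay : BoundedDecayOn T (Ici a)) : ExpExpansiveOn T (Ici a) := by
  obtain ⟨θ, C, hθ1, hC, hnc⟩ := h.norm_le_mul ha
  obtain ⟨K, hK0, hK⟩ := hgrowth.exists_norm_le_of_abs_sub_le hdecay C
  have hθ : θ * exp ((1 - θ) / C * C) < 1 := by
    have := add_one_lt_exp (sub_ne_zero.2 hθ1.ne)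
    rw [div_mul_cancel₀ _ hC.ne', ← lt_div_iff₀ (exp_pos _), one_div, ← exp_neg, neg_sub]
    simpa using this
  have hlam : 0 < (1 - θ) / C := div_pos (by linarith) hC
  exact ⟨_, by positivity, _, hlam, (hT.isCocycleOn ha).expExpansiveWith_of_noncritical
    (fun s hs v => hT.continuousOn_apply ha hs v) hnc hC.le hK hK0.le hlam.le hθ⟩

def stableSubspace (T : ℝ → ℝ → X →L[ℝ] X) (a : ℝ) : Submodule ℝ X where
  carrier := {w | ∃ M, ∀ t, a ≤ t → ‖T t a w‖ ≤ M}
  add_mem' := by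
    rintro x y ⟨M, hM⟩ ⟨N, hN⟩
    refine ⟨M + N, fun t ht => ?_⟩
    rw [map_add]
    exact (norm_add_le _ _).trans (add_le_add (hM t ht) (hN t ht))
  zero_mem' := ⟨0, fun t _ => by simp⟩
  smul_mem' := by
    rintro c x ⟨M, hM⟩
    refine ⟨‖c‖ * M, fun t ht => ?_⟩
    rw [map_smul, norm_smul]
    exact mul_le_mul_of_nonneg_left (hM t ht) (norm_nonneg c)

theorem ExpExpansiveWith.norm_apply_le_of_mem_stableSubspace (h : ExpExpansiveWith T (Ici a) L β)
    (hT : IsCocycleOn T (Ici a)) (hL : 0 ≤ L) (hβ : 0 < β) {w : X}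
    (hw : w ∈ stableSubspace T a) {s t : ℝ} (hs : a ≤ s) (hst : s ≤ t) :
    ‖T t a w‖ ≤ L * exp (-β * (t - s)) * ‖T s a w‖ := by
  obtain ⟨M, hM⟩ := hw
  have hexp : Tendsto (fun b => exp (-β * (b - t))) atTop (𝓝 0) :=
    tendsto_exp_atBot.comp
      ((tendsto_atTop_add_const_right _ (-t) tendsto_id).const_mul_atTop_of_neg (neg_lt_zero.2 hβ))
  have hlim := ((hexp.mul_const M).const_add (exp (-β * (t - s)) * ‖T s a w‖)).const_mul L
  rw [zero_mul, add_zero, ← mul_assoc] at hlim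
  refine ge_of_tendsto hlim ((eventually_ge_atTop t).mono fun b hb => ?_)
  have ht : a ≤ t := hs.trans hst
  have := h (T t a w) s t b hst hb fun x hx => hs.trans hx.1
  rw [hT.apply_apply hs ht self_mem_Ici, hT.apply_apply (ht.trans hb) ht self_mem_Ici] at this
  refine this.trans (mul_le_mul_of_nonneg_left (add_le_add_right ?_ _) hL)
  exact mul_le_mul_of_nonneg_left (hM b (ht.trans hb)) (exp_pos _).le

theorem ExpExpansiveWith.norm_le_of_two_mul_le (h : ExpExpansiveWith T J L β) {v : X} {s t b : ℝ}
    (hst : s ≤ t) (htb : t ≤ b) (hJ : Icc s b ⊆ J)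
    (hv : 2 * L * exp (-β * (t - s)) * ‖T s t v‖ ≤ ‖v‖) :
    ‖v‖ ≤ 2 * L * exp (-β * (b - t)) * ‖T b t v‖ := by
  have := h v s t b hst htb hJ
  linarith

theorem exists_lt_norm_apply_of_notMem_stableSubspace {κ : ℝ} (hκ : 0 ≤ κ) (hβ : 0 ≤ β) {u : X}
    (hu : u ∉ stableSubspace T a) :
    ∃ t, a ≤ t ∧ κ * exp (-β * (t - a)) * ‖u‖ < ‖T t a u‖ := by
  by_contra! hbdd
  refine hu ⟨κ * ‖u‖, fun t ht => (hbdd t ht).trans ?_⟩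
  gcongr
  exact mul_le_of_le_one_right hκ (exp_le_one_iff.2 (by nlinarith))

theorem exists_forall_mem_exists_le_norm_apply [FiniteDimensional ℝ X] {κ : ℝ} (hκ : 0 ≤ κ)
    (hβ : 0 ≤ β) {U : Submodule ℝ X} (hU : Disjoint (stableSubspace T a) U) :
    ∃ t₁, ∀ u ∈ U, ∃ t ∈ Icc a t₁, κ * exp (-β * (t - a)) * ‖u‖ ≤ ‖T t a u‖ := by
  let O : ℝ → Set X := fun r => ⋃ t ∈ Icc a r, {u | κ * exp (-β * (t - a)) * ‖u‖ < ‖T t a u‖}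
  have hcover : Metric.sphere (0 : X) 1 ∩ U ⊆ ⋃ r, O r := by
    rintro u ⟨hu, huU⟩
    have hS : u ∉ stableSubspace T a := fun huS => by
      simp [Submodule.disjoint_def.1 hU u huS huU] at hu
    obtain ⟨t, ht, hlt⟩ := exists_lt_norm_apply_of_notMem_stableSubspace hκ hβ hS
    exact mem_iUnion.2 ⟨t, mem_iUnion₂.2 ⟨t, ⟨ht, le_rfl⟩, hlt⟩⟩
  obtain ⟨r, hr⟩ := ((isCompact_sphere 0 1).inter_right U.closed_of_finiteDimensional)
    |>.elim_directed_cover O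
      (fun r => isOpen_biUnion fun t _ => isOpen_lt (by fun_prop) (by fun_prop)) hcover
      (Monotone.directed_le fun r r' hrr' =>
        biUnion_mono (Icc_subset_Icc_right hrr') fun _ _ => le_rfl)
  refine ⟨max a r, fun u hu => ?_⟩
  rcases eq_or_ne u 0 with rfl | hu0
  · exact ⟨a, ⟨le_rfl, le_max_left _ _⟩, by simp⟩
  have hnu : 0 < ‖u‖ := norm_pos_iff.2 hu0
  have hunit : ‖u‖⁻¹ • u ∈ Metric.sphere (0 : X) 1 ∩ U :=
    ⟨by simp [norm_smul, hnu.ne'], U.smul_mem ‖u‖⁻¹ hu⟩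
  obtain ⟨t, ht, hlt⟩ := mem_iUnion₂.1 (hr hunit)
  refine ⟨t, ⟨ht.1, ht.2.trans (le_max_right _ _)⟩, ?_⟩
  have : κ * exp (-β * (t - a)) < ‖u‖⁻¹ * ‖T t a u‖ := by
    simpa [map_smul, norm_smul, hnu.ne'] using hlt
  rw [lt_inv_mul_iff₀ hnu] at this
  linarith

theorem ExpExpansiveWith.exists_exp_mul_norm_le [FiniteDimensional ℝ X]
    (h : ExpExpansiveWith T (Ici a) L β) (hT : IsCocycleOn T (Ici a)) (hL : 0 < L) (hβ : 0 ≤ β)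
    (hdecay : BoundedDecayOn T (Ici a)) {U : Submodule ℝ X}
    (hU : Disjoint (stableSubspace T a) U) :
    ∃ c, 0 ≤ c ∧ ∀ u ∈ U, ∀ t, a ≤ t → exp (β * (t - a)) * ‖u‖ ≤ c * ‖T t a u‖ := by
  obtain ⟨t₁, ht₁⟩ :=
    exists_forall_mem_exists_le_norm_apply (T := T) (by positivity : 0 ≤ 2 * L) hβ hU
  obtain ⟨K, hK, μ, hμ, hKμ⟩ := hdecay
  refine ⟨exp (2 * β * (t₁ - a)) + K * exp ((μ + β) * (t₁ - a)), by positivity,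
    fun u hu t ht => ?_⟩
  obtain ⟨t', ⟨ht'a, ht't₁⟩, hgrow⟩ := ht₁ u hu
  rcases le_total t' t with ht't | htt'
  · -- growth at time `t'` persists up to time `t`
    have hpersist := h.norm_le_of_two_mul_le (v := T t' a u) ht'a ht't (fun x hx => hx.1)
      (by rwa [hT.apply_apply_self self_mem_Ici ht'a])
    rw [hT.apply_apply (ht'a.trans ht't) ht'a self_mem_Ici] at hpersist
    have : exp (-β * (t' - a)) * ‖u‖ ≤ exp (-β * (t - t')) * ‖T t a u‖ := by nlinarith
    calc exp (β * (t - a)) * ‖u‖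
        = exp (β * (t - a) + β * (t' - a)) * (exp (-β * (t' - a)) * ‖u‖) := by
          rw [← mul_assoc, ← exp_add]; ring_nf
      _ ≤ exp (β * (t - a) + β * (t' - a)) * (exp (-β * (t - t')) * ‖T t a u‖) := by gcongr
      _ = exp (2 * β * (t' - a)) * ‖T t a u‖ := by rw [← mul_assoc, ← exp_add]; ring_nf
      _ ≤ _ := by
          gcongr
          exact le_add_of_le_of_nonneg (exp_le_exp.2 (by nlinarith)) (by positivity)
  · calc exp (β * (t - a)) * ‖u‖ = exp (β * (t - a)) * ‖T a t (T t a u)‖ := by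
          rw [hT.apply_apply_self self_mem_Ici ht]
      _ ≤ exp (β * (t - a)) * (K * exp (μ * (t - a)) * ‖T t a u‖) := by
          gcongr
          exact (T a t).le_of_opNorm_le (hKμ a self_mem_Ici t ht ht) _
      _ = K * exp ((μ + β) * (t - a)) * ‖T t a u‖ := by
          rw [mul_comm K, ← mul_assoc, ← mul_assoc, ← exp_add]; ring_nf
      _ ≤ _ := by
          gcongr
          refine le_add_of_nonneg_of_le (by positivity) (mul_le_mul_of_nonneg_left ?_ hK.le)
          exact exp_le_exp.2 (mul_le_mul_of_nonneg_left (by linarith) (by positivity))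

theorem ExpExpansiveWith.exists_norm_apply_le_of_disjoint [FiniteDimensional ℝ X]
    (h : ExpExpansiveWith T (Ici a) L β) (hT : IsCocycleOn T (Ici a)) (hL : 0 < L) (hβ : 0 ≤ β)
    (hdecay : BoundedDecayOn T (Ici a)) {U : Submodule ℝ X}
    (hU : Disjoint (stableSubspace T a) U) :
    ∃ c, 0 ≤ c ∧ ∀ u ∈ U, ∀ τ t, a ≤ τ → τ ≤ t →
      ‖T τ a u‖ ≤ c * exp (-β * (t - τ)) * ‖T t a u‖ := by
  obtain ⟨c, hc, hgrow⟩ := h.exists_exp_mul_norm_le hT hL hβ hdecay hU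
  refine ⟨L * (c + 1), by positivity, fun u hu τ t hτ hτt => ?_⟩
  have ht : a ≤ t := hτ.trans hτt
  have hexp := h (T τ a u) a τ t hτ hτt fun x hx => hx.1
  rw [hT.apply_apply_self self_mem_Ici hτ, hT.apply_apply ht hτ self_mem_Ici] at hexp
  have hu : exp (-β * (τ - a)) * ‖u‖ ≤ c * exp (-β * (t - τ)) * ‖T t a u‖ :=
    calc exp (-β * (τ - a)) * ‖u‖
        = exp (-β * (τ - a) - β * (t - a)) * (exp (β * (t - a)) * ‖u‖) := by
          rw [← mul_assoc, ← exp_add]; ring_nf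
      _ ≤ exp (-β * (t - τ)) * (c * ‖T t a u‖) := by
          gcongr ?_ * ?_
          · exact exp_le_exp.2 (by nlinarith)
          · exact hgrow u hu t ht
      _ = c * exp (-β * (t - τ)) * ‖T t a u‖ := by ring
  calc ‖T τ a u‖ ≤ L * (c * exp (-β * (t - τ)) * ‖T t a u‖ + exp (-β * (t - τ)) * ‖T t a u‖) :=
        hexp.trans (by gcongr)
    _ = L * (c + 1) * exp (-β * (t - τ)) * ‖T t a u‖ := by ring

theorem IsCocycleOn.bijOn_ker (hT : IsCocycleOn T J) {Q : ℝ → X →L[ℝ] X}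
    (hQ : ∀ {t s}, t ∈ J → s ∈ J → (Q t).comp (T t s) = (T t s).comp (Q s)) {t s : ℝ}
    (ht : t ∈ J) (hs : s ∈ J) :
    BijOn (T t s) (LinearMap.ker (Q s : X →ₗ[ℝ] X)) (LinearMap.ker (Q t : X →ₗ[ℝ] X)) := by
  have hmaps : ∀ {t s}, t ∈ J → s ∈ J →
      MapsTo (T t s) (LinearMap.ker (Q s : X →ₗ[ℝ] X)) (LinearMap.ker (Q t : X →ₗ[ℝ] X)) :=
    fun ht hs x hx => by
      simp only [SetLike.mem_coe, LinearMap.mem_ker, ContinuousLinearMap.coe_coe] at hx ⊢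
      rw [← ContinuousLinearMap.comp_apply, hQ ht hs, ContinuousLinearMap.comp_apply, hx, map_zero]
  exact InvOn.bijOn ⟨fun x _ => hT.apply_apply_self hs ht x, fun y _ => hT.apply_apply_self ht hs y⟩
    (hmaps ht hs) (hmaps hs ht)

def transportProj (T : ℝ → ℝ → X →L[ℝ] X) (a : ℝ) (P₀ : X →L[ℝ] X) (t : ℝ) : X →L[ℝ] X :=
  (T t a).comp (P₀.comp (T a t))

theorem IsCocycleOn.apply_transportProj (hT : IsCocycleOn T (Ici a)) {s t : ℝ} (hs : a ≤ s)
    (ht : a ≤ t) (v : X) : T s t (transportProj T a P₀ t v) = T s a (P₀ (T a t v)) :=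
  hT.apply_apply hs ht self_mem_Ici _

theorem IsCocycleOn.apply_sub_transportProj (hT : IsCocycleOn T (Ici a)) {s t : ℝ} (hs : a ≤ s)
    (ht : a ≤ t) (v : X) :
    T s t (v - transportProj T a P₀ t v) = T s a (T a t v - P₀ (T a t v)) := by
  rw [map_sub, map_sub, hT.apply_transportProj hs ht, hT.apply_apply hs self_mem_Ici ht]

theorem IsCocycleOn.transportProj_comp (hT : IsCocycleOn T (Ici a)) {s t : ℝ} (ht : a ≤ t)
    (hs : a ≤ s) :
    (transportProj T a P₀ t).comp (T t s) = (T t s).comp (transportProj T a P₀ s) := by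
  ext v
  simp only [ContinuousLinearMap.comp_apply, transportProj]
  rw [hT.apply_apply self_mem_Ici ht hs, hT.apply_apply ht hs self_mem_Ici]

theorem IsCocycleOn.transportProj_idem (hT : IsCocycleOn T (Ici a)) (hP₀ : ∀ x, P₀ (P₀ x) = P₀ x)
    {t : ℝ} (ht : a ≤ t) :
    (transportProj T a P₀ t).comp (transportProj T a P₀ t) = transportProj T a P₀ t := by
  ext v
  simp only [ContinuousLinearMap.comp_apply, transportProj]
  rw [hT.apply_apply_self self_mem_Ici ht, hP₀]

theorem IsCocycleOn.exists_norm_sub_transportProj_le (hT : IsCocycleOn T (Ici a))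
    (hP₀ : ∀ x, P₀ (P₀ x) = P₀ x) (hL : 0 ≤ L) (hc : 0 ≤ c) (hβ : 0 < β)
    (hS : ∀ w s t, a ≤ s → s ≤ t → ‖T t a (P₀ w)‖ ≤ L * exp (-β * (t - s)) * ‖T s a (P₀ w)‖)
    (hU : ∀ u, P₀ u = 0 → ∀ τ t, a ≤ τ → τ ≤ t → ‖T τ a u‖ ≤ c * exp (-β * (t - τ)) * ‖T t a u‖)
    (hgrowth : BoundedGrowthOn T (Ici a)) :
    ∃ C, 0 ≤ C ∧ ∀ t, a ≤ t → ∀ v, ‖v - transportProj T a P₀ t v‖ ≤ C * ‖v‖ := by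
  obtain ⟨K, hK, μ, hμ, hKμ⟩ := hgrowth
  -- over the time `Δ` the unstable part outgrows the stable part by a factor `2`, so the two
  -- parts of `v` cannot nearly cancel
  set Δ := L * c / β
  have hΔ : 0 ≤ Δ := by positivity
  have hεκ : 2 * (L * exp (-β * Δ)) * (c * exp (-β * Δ)) ≤ 1 := by
    have h2Δ : 2 * L * c ≤ exp (2 * β * Δ) := by
      have h := add_one_le_exp (2 * β * Δ)
      rw [show 2 * β * Δ = 2 * L * c by simp only [Δ]; field_simp] at h ⊢
      linarith
    calc 2 * (L * exp (-β * Δ)) * (c * exp (-β * Δ)) = 2 * L * c * exp (-(2 * β * Δ)) := by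
          rw [show -(2 * β * Δ) = -β * Δ + -β * Δ by ring, exp_add]; ring
      _ ≤ exp (2 * β * Δ) * exp (-(2 * β * Δ)) := by gcongr
      _ = 1 := by rw [← exp_add, add_neg_cancel, exp_zero]
  refine ⟨2 * (c * exp (-β * Δ)) * (K * exp (μ * Δ) + L * exp (-β * Δ)), by positivity,
    fun t ht v => ?_⟩
  have htΔ : a ≤ t + Δ := by linarith
  have hself : ∀ x, T t t x = x := hT.apply_self ht
  set w := T a t v
  have key := norm_le_of_contracting_of_expanding (T (t + Δ) t) (x := transportProj T a P₀ t v)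
    (y := v - transportProj T a P₀ t v) (M := K * exp (μ * Δ)) (by positivity) (by positivity) hεκ
    ?_ ?_ ?_
  · rwa [add_sub_cancel] at key
  · rw [hT.apply_transportProj htΔ ht, ← hself (transportProj T a P₀ t v),
      hT.apply_transportProj ht ht]
    simpa using hS w t (t + Δ) ht (by linarith)
  · rw [hT.apply_sub_transportProj htΔ ht, ← hself (v - transportProj T a P₀ t v),
      hT.apply_sub_transportProj ht ht]
    simpa using hU (w - P₀ w) (by rw [map_sub, hP₀, sub_self])
      t (t + Δ) ht (by linarith)
  · rw [add_sub_cancel]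
    refine (T (t + Δ) t).le_of_opNorm_le ?_ v
    simpa using hKμ (t + Δ) htΔ t ht (by linarith)

theorem IsCocycleOn.expDichotomyProjWith_transportProj (hT : IsCocycleOn T (Ici a))
    (hP₀ : ∀ x, P₀ (P₀ x) = P₀ x) (hL : 0 ≤ L) (hc : 0 ≤ c) (hC : 0 ≤ C)
    (hS : ∀ w s t, a ≤ s → s ≤ t → ‖T t a (P₀ w)‖ ≤ L * exp (-β * (t - s)) * ‖T s a (P₀ w)‖)
    (hU : ∀ u, P₀ u = 0 → ∀ τ t, a ≤ τ → τ ≤ t → ‖T τ a u‖ ≤ c * exp (-β * (t - τ)) * ‖T t a u‖)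
    (hproj : ∀ t, a ≤ t → ∀ v, ‖v - transportProj T a P₀ t v‖ ≤ C * ‖v‖) :
    ExpDichotomyProjWith T (Ici a) (transportProj T a P₀) (L * (1 + C) + c * C) β := by
  have hD : 0 ≤ L * (1 + C) + c * C := by positivity
  refine ⟨fun t ht => hT.transportProj_idem hP₀ ht,
    fun t ht s hs _ => hT.transportProj_comp ht hs,
    fun t ht s hs _ => hT.bijOn_ker (fun ht hs => hT.transportProj_comp ht hs) ht hs,
    fun t ht s hs hst => ?_, fun t ht s hs hts => ?_⟩
  · refine ContinuousLinearMap.opNorm_le_bound _ (by positivity) fun v => ?_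
    have hPv : ‖transportProj T a P₀ s v‖ ≤ (1 + C) * ‖v‖ := by
      have := norm_sub_le v (v - transportProj T a P₀ s v)
      rw [sub_sub_cancel] at this
      linarith [hproj s hs v]
    have hS' := hS (T a s v) s t hs hst
    rw [← hT.apply_transportProj ht hs, ← hT.apply_transportProj hs hs,
      hT.apply_self hs] at hS'
    rw [ContinuousLinearMap.comp_apply]
    calc ‖T t s (transportProj T a P₀ s v)‖ ≤ L * exp (-β * (t - s)) * ((1 + C) * ‖v‖) :=
          hS'.trans (by gcongr)
      _ = L * (1 + C) * exp (-β * (t - s)) * ‖v‖ := by ring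
      _ ≤ (L * (1 + C) + c * C) * exp (-β * (t - s)) * ‖v‖ := by
          gcongr
          exact le_add_of_nonneg_right (by positivity)
  · refine ContinuousLinearMap.opNorm_le_bound _ (by positivity) fun v => ?_
    have hU' := hU (T a s v - P₀ (T a s v)) (by rw [map_sub, hP₀, sub_self]) t s ht hts
    rw [← hT.apply_sub_transportProj ht hs, ← hT.apply_sub_transportProj hs hs,
      hT.apply_self hs] at hU'
    rw [ContinuousLinearMap.comp_apply, sub_apply, ContinuousLinearMap.id_apply]
    calc ‖T t s (v - transportProj T a P₀ s v)‖ ≤ c * exp (-β * (s - t)) * (C * ‖v‖) :=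
          hU'.trans (by gcongr; exact hproj s hs v)
      _ = c * C * exp (-β * (s - t)) * ‖v‖ := by ring
      _ ≤ (L * (1 + C) + c * C) * exp (-β * (s - t)) * ‖v‖ := by
          gcongr
          exact le_add_of_nonneg_left (by positivity)

theorem ExpExpansiveOn.expDichotomyOn [FiniteDimensional ℝ X] (h : ExpExpansiveOn T (Ici a))
    (hT : IsCocycleOn T (Ici a)) (hgrowth : BoundedGrowthOn T (Ici a))
    (hdecay : BoundedDecayOn T (Ici a)) : ExpDichotomyOn T (Ici a) := by
  obtain ⟨L, hL, β, hβ, hexp : ExpExpansiveWith T (Ici a) L β⟩ := h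
  set S := stableSubspace T a
  obtain ⟨f, hf⟩ := Submodule.ClosedComplemented.of_finiteDimensional S
  set P₀ := S.subtypeL.comp f
  have hP₀S : ∀ w, P₀ w ∈ S := fun w => (f w).2
  have hP₀fix : ∀ w ∈ S, P₀ w = w := fun w hw => congrArg Subtype.val (hf ⟨w, hw⟩)
  have hP₀ : ∀ x, P₀ (P₀ x) = P₀ x := fun x => hP₀fix _ (hP₀S x)
  have hker : Disjoint S (LinearMap.ker (P₀ : X →ₗ[ℝ] X)) :=
    Submodule.disjoint_def.2 fun x hS hK => (hP₀fix x hS).symm.trans hK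
  obtain ⟨c, hc, hU⟩ := hexp.exists_norm_apply_le_of_disjoint hT hL hβ.le hdecay hker
  have hS w s t (hs : a ≤ s) (hst : s ≤ t) :=
    hexp.norm_apply_le_of_mem_stableSubspace hT hL.le hβ (hP₀S w) hs hst
  obtain ⟨C, hC, hproj⟩ := hT.exists_norm_sub_transportProj_le hP₀ hL.le hc hβ hS
    (fun u hu => hU u hu) hgrowth
  exact ⟨_, _, β, by positivity, hβ,
    hT.expDichotomyProjWith_transportProj hP₀ hL.le hc hC hS (fun u hu => hU u hu) hproj⟩

end

/-- Let `X` be a finite-dimensional Banach space and `T` an invertible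
evolution family with bounded growth and bounded decay on `[a₀*, ∞)`. Then the following
are equivalent: (a) `T` admits an exponential dichotomy on `[a₀*, ∞)`; (b) `T` is
exponentially expansive on `[a₀*, ∞)`; (c) `T` is uniformly noncritical on `[a₀*, ∞)`. -/
theorem expDichotomy_iff_expExpansive_iff_unifNoncritical_finiteDim
    [FiniteDimensional ℝ X]
    (a₀ : EReal) (T : ℝ → ℝ → X →L[ℝ] X) (astar : ℝ)
    (hT : IsInvertibleEvolutionFamily a₀ T)
    (hastar : a₀ < (astar : EReal))
    (hgrowth : BoundedGrowthOn T (Set.Ici astar))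
    (hdecay : BoundedDecayOn T (Set.Ici astar)) :
    (ExpDichotomyOn T (Set.Ici astar) ↔ ExpExpansiveOn T (Set.Ici astar)) ∧
    (ExpExpansiveOn T (Set.Ici astar) ↔ UnifNoncriticalOn a₀ T astar) := by
  have hcoc := hT.isCocycleOn hastar
  exact ⟨⟨fun h => h.expExpansiveOn hcoc, fun h => h.expDichotomyOn hcoc hgrowth hdecay⟩,
    ⟨fun h => h.unifNoncriticalOn hastar, fun h => h.expExpansiveOn hT hastar hgrowth hdecay⟩⟩
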